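/- arXiv:2409.13353 — 3 statements merged into one kernel-verified Lean document; each statement's English description precedes it below -/
import Mathlib

section
/- Let n ≥ 1, μ ∈ (0,2), and let u be a classical compactly supported solution of the linear damped wave equation ∂_t²u − Δu + (μ/(1+t))∂_t u = 0 on [0,∞) × ℝⁿ. Define E₀(t) := (1/2)∫_{ℝⁿ}( |∇_x u(t,x)|² + (∂_t u(t,x))² ) dx, E₁(t) := ∫_{ℝⁿ}( u ∂_t u + u²/(2(1+t)) ) dx, and E₂(t) := E₀(t) + (μ/(2(1+t))) E₁(t). Then E₂ is differentiable on (0,∞) and satisfies, for all t > 0: d/dt E₂(t) + (μ/(1+t)) E₂(t) + (μ(2−μ)/(4(1+t)³)) ∫_{ℝⁿ} u(t,x)² dx = 0. -/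
open MeasureTheory Real Set

noncomputable section

/-- First time derivative `∂ₜu`. -/
def tderiv {n : ℕ} (u : ℝ → (Fin n → ℝ) → ℝ) (t : ℝ) (x : Fin n → ℝ) : ℝ :=
  deriv (fun τ => u τ x) t

/-- Second time derivative `∂ₜ²u`. -/
def tderiv2 {n : ℕ} (u : ℝ → (Fin n → ℝ) → ℝ) (t : ℝ) (x : Fin n → ℝ) : ℝ :=
  deriv (fun τ => tderiv u τ x) t

/-- `i`-th spatial partial derivative `∂ᵢ g`. -/
def pd {n : ℕ} (i : Fin n) (g : (Fin n → ℝ) → ℝ) : (Fin n → ℝ) → ℝ :=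
  fun x => fderiv ℝ g x (Pi.single i 1)

/-- Squared Euclidean norm of the spatial gradient, `|∇g(x)|²`. -/
def gradSq {n : ℕ} (g : (Fin n → ℝ) → ℝ) (x : Fin n → ℝ) : ℝ :=
  ∑ i, (pd i g x) ^ 2

/-- Spatial Laplacian `Δg(x)`. -/
def lap {n : ℕ} (g : (Fin n → ℝ) → ℝ) (x : Fin n → ℝ) : ℝ :=
  ∑ i, pd i (pd i g) x

/-- A classical compactly supported solution of
`∂ₜ²u − Δu + (μ/(1+t)) ∂ₜu = 0` on `[0,∞) × ℝⁿ`:  `u` is `C²` on `[0,∞) × ℝⁿ`,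
satisfies the equation pointwise for `t ≥ 0`, and for every `T > 0` vanishes outside
a compact spatial set for all `t ∈ [0,T]`. -/
def IsSol (n : ℕ) (μ : ℝ) (u : ℝ → (Fin n → ℝ) → ℝ) : Prop :=
  ContDiffOn ℝ 2 (fun q : ℝ × (Fin n → ℝ) => u q.1 q.2) (Set.Ici (0:ℝ) ×ˢ Set.univ) ∧
  (∀ t, 0 ≤ t → ∀ x, tderiv2 u t x - lap (u t) x + (μ / (1 + t)) * tderiv u t x = 0) ∧
  (∀ T, 0 < T → ∃ K : Set (Fin n → ℝ), IsCompact K ∧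
    ∀ t ∈ Set.Icc (0:ℝ) T, ∀ x, x ∉ K → u t x = 0)

/-- The energy `E₀(t) = (1/2)∫ (|∇u|² + (∂ₜu)²) dx`. -/
def E0 {n : ℕ} (u : ℝ → (Fin n → ℝ) → ℝ) (t : ℝ) : ℝ :=
  (1 / 2) * ∫ x, (gradSq (u t) x + (tderiv u t x) ^ 2)

/-- The functional `E₁(t) = ∫ ( u ∂ₜu + u²/(2(1+t)) ) dx`. -/
def E1 {n : ℕ} (u : ℝ → (Fin n → ℝ) → ℝ) (t : ℝ) : ℝ :=
  ∫ x, (u t x * tderiv u t x + (u t x) ^ 2 / (2 * (1 + t)))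

/-- `E₂(t) = E₀(t) + (μ/(2(1+t))) E₁(t)`. -/
def E2 {n : ℕ} (μ : ℝ) (u : ℝ → (Fin n → ℝ) → ℝ) (t : ℝ) : ℝ :=
  E0 u t + (μ / (2 * (1 + t))) * E1 u t

/-!
Let `e` (`energyDensity`) be the integrand of `E₂` and `Fᵢ := (∂ₜu + μ/(2(1+t)) u) ∂ᵢu`
(`energyFlux`). Differentiating `e` in `t` and substituting `∂ₜ²u = Δu − (μ/(1+t)) ∂ₜu` gives
the pointwise identity `∂ₜe = −(μ/(1+t)) e − μ(2−μ)/(4(1+t)³) u² + Σᵢ ∂ᵢFᵢ`, whose only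
analytic input is `∂ₜ∂ᵢu = ∂ᵢ∂ₜu`. On a time interval around `t` everything vanishes outside a
fixed compact set, so `E₂` may be differentiated under the integral sign, and the divergence
terms integrate to zero.
-/

open Filter Topology Function

section Slices

variable {E F : Type*} [NormedAddCommGroup E] [NormedSpace ℝ E]
  [NormedAddCommGroup F] [NormedSpace ℝ F]

theorem DifferentiableAt.hasDerivAt_slice_fst {G : ℝ × E → F} {t : ℝ} {x : E}
    (hG : DifferentiableAt ℝ G (t, x)) :
    HasDerivAt (fun τ => G (τ, x)) (fderiv ℝ G (t, x) (1, 0)) t :=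
  hG.hasFDerivAt.comp_hasDerivAt t ((hasDerivAt_id t).prodMk (hasDerivAt_const t x))

theorem DifferentiableAt.fderiv_slice_snd_apply {G : ℝ × E → F} {t : ℝ} {x : E}
    (hG : DifferentiableAt ℝ G (t, x)) (v : E) :
    fderiv ℝ (fun y => G (t, y)) x v = fderiv ℝ G (t, x) (0, v) := by
  have h := hG.hasFDerivAt.comp x ((hasFDerivAt_const t x).prodMk (hasFDerivAt_id x))
  rw [show (fun y => G (t, y)) = G ∘ Prod.mk t from rfl, h.fderiv]
  rfl

theorem ContDiffOn.contDiff_slice_snd {k : WithTop ℕ∞} {G : ℝ × E → F} {s : Set ℝ}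
    (hG : ContDiffOn ℝ k G (s ×ˢ univ)) {t : ℝ} (ht : t ∈ s) :
    ContDiff ℝ k (fun x => G (t, x)) :=
  hG.comp_contDiff (contDiff_const.prodMk contDiff_id) fun x => ⟨ht, mem_univ x⟩

theorem ContDiffOn.hasDerivAt_deriv_slice_fst {k : WithTop ℕ∞} {G : ℝ × E → F} {s : Set ℝ}
    (hG : ContDiffOn ℝ k G (s ×ˢ univ)) (hk : k ≠ 0) (hs : IsOpen s) {t : ℝ} (ht : t ∈ s)
    (x : E) : HasDerivAt (fun τ => G (τ, x)) (deriv (fun τ => G (τ, x)) t) t :=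
  ((hG.differentiableOn hk).differentiableAt ((hs.prod isOpen_univ).mem_nhds
    ⟨ht, mem_univ x⟩)).hasDerivAt_slice_fst.differentiableAt.hasDerivAt

theorem ContDiffAt.deriv_fderiv_slice_comm {G : ℝ × E → ℝ} {t : ℝ} {x : E}
    (hG : ContDiffAt ℝ 2 G (t, x)) (v : E) :
    deriv (fun τ => fderiv ℝ (fun y => G (τ, y)) x v) t
      = fderiv ℝ (fun y => deriv (fun τ => G (τ, y)) t) x v := by
  have hdiff : ∀ᶠ q in 𝓝 (t, x), DifferentiableAt ℝ G q :=
    (hG.eventually (by simp)).mono fun q hq => hq.differentiableAt (by simp)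
  have hG' : DifferentiableAt ℝ (fderiv ℝ G) (t, x) :=
    (hG.fderiv_right (m := 1) le_rfl).differentiableAt one_ne_zero
  have hG'_apply : ∀ w, DifferentiableAt ℝ (fun q => fderiv ℝ G q w) (t, x) := fun w =>
    hG'.clm_apply (differentiableAt_const w)
  have htime : (fun τ => fderiv ℝ (fun y => G (τ, y)) x v)
      =ᶠ[𝓝 t] fun τ => fderiv ℝ G (τ, x) (0, v) :=
    ((continuous_id.prodMk continuous_const).tendsto t).eventually hdiff |>.mono
      fun τ hτ => hτ.fderiv_slice_snd_apply v
  have hspace : (fun y => deriv (fun τ => G (τ, y)) t)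
      =ᶠ[𝓝 x] fun y => fderiv ℝ G (t, y) (1, 0) :=
    ((continuous_const.prodMk continuous_id).tendsto x).eventually hdiff |>.mono
      fun y hy => hy.hasDerivAt_slice_fst.deriv
  rw [htime.deriv_eq, hspace.fderiv_eq, (hG'_apply (0, v)).hasDerivAt_slice_fst.deriv,
    (hG'_apply (1, 0)).fderiv_slice_snd_apply v, fderiv_clm_apply hG' (differentiableAt_const _),
    fderiv_clm_apply hG' (differentiableAt_const _)]
  simpa using (hG.isSymmSndFDerivAt (by simp)) (1, 0) (0, v)

end Slices

section Integrals

variable {E : Type*} [NormedAddCommGroup E] [NormedSpace ℝ E] [MeasurableSpace E]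

theorem integral_fderiv_apply_eq_zero [BorelSpace E] [FiniteDimensional ℝ E] {ν : Measure E}
    [ν.IsAddHaarMeasure] {g : E → ℝ} (hg : ContDiff ℝ 1 g) (hgc : HasCompactSupport g) (v : E) :
    ∫ x, fderiv ℝ g x v ∂ν = 0 := by
  have h := integral_mul_fderiv_eq_neg_fderiv_mul_of_integrable (μ := ν) (f := fun _ => (1 : ℝ))
    (g := g) (v := v) (by simp) (by simpa using ((hg.continuous_fderiv one_ne_zero).clm_apply
      continuous_const).integrable_of_hasCompactSupport (hgc.fderiv_apply (𝕜 := ℝ) v))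
    (by simpa using hg.continuous.integrable_of_hasCompactSupport hgc)
    (fun _ _ => differentiableAt_const _) (fun x _ => hg.differentiable one_ne_zero x)
  simpa using h

theorem hasDerivAt_integral_of_contDiffOn [OpensMeasurableSpace E] {ν : Measure E}
    [IsFiniteMeasureOnCompacts ν] {G : ℝ × E → ℝ} {s : Set ℝ} (hs : IsOpen s)
    (hG : ContDiffOn ℝ 1 G (s ×ˢ univ)) {K : Set E} (hK : IsCompact K)
    (hGK : ∀ τ ∈ s, ∀ x ∉ K, G (τ, x) = 0) {t : ℝ} (ht : t ∈ s) :
    HasDerivAt (fun τ => ∫ x, G (τ, x) ∂ν) (∫ x, deriv (fun τ => G (τ, x)) t ∂ν) t := by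
  have hΩ : IsOpen (s ×ˢ (univ : Set E)) := hs.prod isOpen_univ
  set G' : ℝ × E → ℝ := fun q => fderiv ℝ G q (1, 0)
  have hG'cont : ContinuousOn G' (s ×ˢ univ) :=
    (hG.continuousOn_fderiv_of_isOpen hΩ le_rfl).clm_apply continuousOn_const
  have hderiv : ∀ τ ∈ s, ∀ x, HasDerivAt (fun σ => G (σ, x)) (G' (τ, x)) τ := fun τ hτ x =>
    ((hG.differentiableOn one_ne_zero).differentiableAt
      (hΩ.mem_nhds ⟨hτ, mem_univ x⟩)).hasDerivAt_slice_fst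
  have hG'K : ∀ τ ∈ s, ∀ x ∉ K, G' (τ, x) = 0 := by
    intro τ hτ x hx
    have h0 : G =ᶠ[𝓝 (τ, x)] fun _ => 0 :=
      eventually_of_mem ((hs.prod hK.isClosed.isOpen_compl).mem_nhds ⟨hτ, hx⟩)
        fun q hq => hGK q.1 hq.1 q.2 hq.2
    simp [G', h0.fderiv_eq]
  have hslice : ∀ τ ∈ s, ∀ H : ℝ × E → ℝ, ContinuousOn H (s ×ˢ univ) →
      Continuous fun x => H (τ, x) := fun τ hτ H hH =>
    hH.comp_continuous (continuous_const.prodMk continuous_id) fun x => ⟨hτ, mem_univ x⟩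
  obtain ⟨ε, hε, hεs⟩ := Metric.nhds_basis_closedBall.mem_iff.1 (hs.mem_nhds ht)
  obtain ⟨C, hC⟩ : ∃ C, ∀ q ∈ Metric.closedBall t ε ×ˢ K, ‖G' q‖ ≤ C :=
    ((isCompact_closedBall t ε).prod hK).exists_bound_of_continuousOn
      (hG'cont.mono (prod_mono hεs (subset_univ K)))
  have h_bound : ∀ᵐ x ∂ν, ∀ τ ∈ Metric.ball t ε, ‖G' (τ, x)‖ ≤ K.indicator (fun _ => C) x := by
    refine .of_forall fun x τ hτ => ?_
    by_cases hx : x ∈ K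
    · rw [indicator_of_mem hx]
      exact hC (τ, x) ⟨Metric.ball_subset_closedBall hτ, hx⟩
    · rw [indicator_of_notMem hx, hG'K τ (hεs (Metric.ball_subset_closedBall hτ)) x hx, norm_zero]
  have key := hasDerivAt_integral_of_dominated_loc_of_deriv_le (Metric.ball_mem_nhds t hε)
    (F := fun τ x => G (τ, x)) (F' := fun τ x => G' (τ, x))
    (eventually_of_mem (hs.mem_nhds ht) fun τ hτ =>
      (hslice τ hτ G hG.continuousOn).aestronglyMeasurable)
    ((hslice t ht G hG.continuousOn).integrable_of_hasCompactSupport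
      (HasCompactSupport.intro hK (hGK t ht)))
    (hslice t ht G' hG'cont).aestronglyMeasurable h_bound
    ((integrable_indicator_iff hK.measurableSet).2 (integrableOn_const hK.measure_lt_top.ne))
    (.of_forall fun x τ hτ => hderiv τ (hεs (Metric.ball_subset_closedBall hτ)) x)
  simpa only [(hderiv t ht _).deriv] using key.2

end Integrals

section Solution

variable {n : ℕ} {u : ℝ → (Fin n → ℝ) → ℝ} {s : Set ℝ}

theorem contDiffOn_uncurry_tderiv (hs : IsOpen s) (hu : ContDiffOn ℝ 2 (uncurry u) (s ×ˢ univ)) :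
    ContDiffOn ℝ 1 (uncurry (tderiv u)) (s ×ˢ univ) := by
  refine ((hu.fderiv_of_isOpen (hs.prod isOpen_univ) (by norm_num)).clm_apply
    (contDiffOn_const (c := ((1 : ℝ), (0 : Fin n → ℝ))))).congr fun q hq => ?_
  exact (((hu.differentiableOn two_ne_zero).differentiableAt
    ((hs.prod isOpen_univ).mem_nhds hq)).hasDerivAt_slice_fst).deriv

theorem contDiffOn_pd (hs : IsOpen s) (hu : ContDiffOn ℝ 2 (uncurry u) (s ×ˢ univ))
    (i : Fin n) : ContDiffOn ℝ 1 (fun q : ℝ × (Fin n → ℝ) => pd i (u q.1) q.2) (s ×ˢ univ) := by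
  refine ((hu.fderiv_of_isOpen (hs.prod isOpen_univ) (by norm_num)).clm_apply
    (contDiffOn_const (c := ((0 : ℝ), (Pi.single i 1 : Fin n → ℝ))))).congr fun q hq => ?_
  exact ((hu.differentiableOn two_ne_zero).differentiableAt
    ((hs.prod isOpen_univ).mem_nhds hq)).fderiv_slice_snd_apply _

theorem hasDerivAt_pd (hs : IsOpen s) (hu : ContDiffOn ℝ 2 (uncurry u) (s ×ˢ univ))
    {t : ℝ} (ht : t ∈ s) (i : Fin n) (x : Fin n → ℝ) :
    HasDerivAt (fun τ => pd i (u τ) x) (pd i (tderiv u t) x) t := by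
  refine ((contDiffOn_pd hs hu i).hasDerivAt_deriv_slice_fst one_ne_zero hs ht x).congr_deriv ?_
  exact (hu.contDiffAt ((hs.prod isOpen_univ).mem_nhds ⟨ht, mem_univ x⟩)).deriv_fderiv_slice_comm
    (G := uncurry u) _

variable {T : ℝ} {K : Set (Fin n → ℝ)}

theorem tderiv_eq_zero_of_notMem (hvanish : ∀ τ ∈ Ioo 0 T, ∀ x ∉ K, u τ x = 0) {t : ℝ}
    (ht : t ∈ Ioo 0 T) {x : Fin n → ℝ} (hx : x ∉ K) : tderiv u t x = 0 := by
  have h0 : (fun τ => u τ x) =ᶠ[𝓝 t] fun _ => 0 :=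
    eventually_of_mem (isOpen_Ioo.mem_nhds ht) fun τ hτ => hvanish τ hτ x hx
  rw [tderiv, h0.deriv_eq, deriv_const]

theorem pd_eq_zero_of_notMem (hK : IsClosed K) (hvanish : ∀ τ ∈ Ioo 0 T, ∀ x ∉ K, u τ x = 0)
    {t : ℝ} (ht : t ∈ Ioo 0 T) (i : Fin n) {x : Fin n → ℝ} (hx : x ∉ K) : pd i (u t) x = 0 := by
  have h0 : u t =ᶠ[𝓝 x] fun _ => 0 :=
    eventually_of_mem (hK.isOpen_compl.mem_nhds hx) fun y hy => hvanish t ht y hy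
  rw [pd, h0.fderiv_eq, fderiv_const_apply]
  rfl

end Solution

def energyDensity {n : ℕ} (μ : ℝ) (u : ℝ → (Fin n → ℝ) → ℝ) (t : ℝ) (x : Fin n → ℝ) : ℝ :=
  (1 / 2) * (gradSq (u t) x + (tderiv u t x) ^ 2)
    + μ / (2 * (1 + t)) * (u t x * tderiv u t x + (u t x) ^ 2 / (2 * (1 + t)))

def energyFlux {n : ℕ} (μ : ℝ) (u : ℝ → (Fin n → ℝ) → ℝ) (t : ℝ) (i : Fin n)
    (x : Fin n → ℝ) : ℝ :=
  (tderiv u t x + μ / (2 * (1 + t)) * u t x) * pd i (u t) x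

section Energy

variable {n : ℕ} {μ : ℝ} {u : ℝ → (Fin n → ℝ) → ℝ} {T : ℝ} {K : Set (Fin n → ℝ)}

theorem energyDensity_eq_zero_of_notMem (hK : IsClosed K)
    (hvanish : ∀ τ ∈ Ioo 0 T, ∀ x ∉ K, u τ x = 0) {t : ℝ} (ht : t ∈ Ioo 0 T)
    {x : Fin n → ℝ} (hx : x ∉ K) : energyDensity μ u t x = 0 := by
  simp [energyDensity, gradSq, hvanish t ht x hx, tderiv_eq_zero_of_notMem hvanish ht hx,
    pd_eq_zero_of_notMem hK hvanish ht _ hx]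

theorem energyFlux_eq_zero_of_notMem (hvanish : ∀ τ ∈ Ioo 0 T, ∀ x ∉ K, u τ x = 0) {t : ℝ}
    (ht : t ∈ Ioo 0 T) (i : Fin n) {x : Fin n → ℝ} (hx : x ∉ K) : energyFlux μ u t i x = 0 := by
  simp [energyFlux, hvanish t ht x hx, tderiv_eq_zero_of_notMem hvanish ht hx]

variable (hu : ContDiffOn ℝ 2 (uncurry u) (Ioi 0 ×ˢ univ))
include hu

theorem contDiffOn_energyDensity :
    ContDiffOn ℝ 1 (uncurry (energyDensity μ u)) (Ioi 0 ×ˢ univ) := by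
  have hu1 : ContDiffOn ℝ 1 (uncurry u) (Ioi 0 ×ˢ univ) := hu.of_le (by norm_num)
  have hw := contDiffOn_uncurry_tderiv isOpen_Ioi hu
  have hg := contDiffOn_pd isOpen_Ioi hu
  have hden : ContDiffOn ℝ 1 (fun q : ℝ × (Fin n → ℝ) => 2 * (1 + q.1)) (Ioi 0 ×ˢ univ) :=
    (contDiff_const.mul (contDiff_const.add contDiff_fst)).contDiffOn
  have hden0 : ∀ q ∈ Ioi (0 : ℝ) ×ˢ (univ : Set (Fin n → ℝ)), 2 * (1 + q.1) ≠ 0 :=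
    fun q hq => by have : (0 : ℝ) < q.1 := hq.1; positivity
  unfold uncurry energyDensity gradSq
  exact (contDiffOn_const.mul ((ContDiffOn.sum fun i _ => (hg i).pow 2).add (hw.pow 2))).add
    ((contDiffOn_const.div hden hden0).mul ((hu1.mul hw).add ((hu1.pow 2).div hden hden0)))

theorem contDiff_energyFlux {t : ℝ} (ht : 0 < t) (i : Fin n) :
    ContDiff ℝ 1 (energyFlux μ u t i) :=
  (((contDiffOn_uncurry_tderiv isOpen_Ioi hu).contDiff_slice_snd ht).add
    (contDiff_const.mul ((hu.of_le (by norm_num)).contDiff_slice_snd ht))).mul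
    ((contDiffOn_pd isOpen_Ioi hu i).contDiff_slice_snd ht)

theorem pd_energyFlux {t : ℝ} (ht : 0 < t) (i : Fin n) (x : Fin n → ℝ) :
    pd i (energyFlux μ u t i) x
      = (pd i (tderiv u t) x + μ / (2 * (1 + t)) * pd i (u t) x) * pd i (u t) x
        + (tderiv u t x + μ / (2 * (1 + t)) * u t x) * pd i (pd i (u t)) x := by
  have hw : DifferentiableAt ℝ (tderiv u t) x :=
    (((contDiffOn_uncurry_tderiv isOpen_Ioi hu).contDiff_slice_snd ht).differentiable
      one_ne_zero) x
  have hv : DifferentiableAt ℝ (u t) x :=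
    ((hu.contDiff_slice_snd ht).differentiable two_ne_zero) x
  have hg : DifferentiableAt ℝ (pd i (u t)) x :=
    (((contDiffOn_pd isOpen_Ioi hu i).contDiff_slice_snd ht).differentiable one_ne_zero) x
  have h : HasFDerivAt (energyFlux μ u t i) _ x :=
    (hw.hasFDerivAt.add (hv.hasFDerivAt.const_mul (μ / (2 * (1 + t))))).mul hg.hasFDerivAt
  rw [pd, h.fderiv]
  simp only [Pi.add_apply, pd, smul_add, add_apply, smul_apply, smul_eq_mul]
  ring

theorem hasDerivAt_energyDensity {t : ℝ} (ht : 0 < t) (x : Fin n → ℝ)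
    (hpde : tderiv2 u t x - lap (u t) x + μ / (1 + t) * tderiv u t x = 0) :
    HasDerivAt (fun τ => energyDensity μ u τ x)
      (-(μ / (1 + t)) * energyDensity μ u t x - μ * (2 - μ) / (4 * (1 + t) ^ 3) * (u t x) ^ 2
        + ∑ i, pd i (energyFlux μ u t i) x) t := by
  have hv : HasDerivAt (fun τ => u τ x) (tderiv u t x) t :=
    hu.hasDerivAt_deriv_slice_fst two_ne_zero isOpen_Ioi ht x
  have hw : HasDerivAt (fun τ => tderiv u τ x) (tderiv2 u t x) t :=
    (contDiffOn_uncurry_tderiv isOpen_Ioi hu).hasDerivAt_deriv_slice_fst one_ne_zero isOpen_Ioi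
      ht x
  have hg : ∀ i, HasDerivAt (fun τ => pd i (u τ) x) (pd i (tderiv u t) x) t :=
    fun i => hasDerivAt_pd isOpen_Ioi hu ht i x
  have hden : HasDerivAt (fun τ => 2 * (1 + τ)) 2 t := by
    simpa using ((hasDerivAt_id t).const_add 1).const_mul (2 : ℝ)
  have hden0 : 2 * (1 + t) ≠ 0 := by positivity
  refine ((((HasDerivAt.fun_sum fun i _ => (hg i).pow 2).add (hw.pow 2)).const_mul (1 / 2)).add
    (((hasDerivAt_const t μ).div hden hden0).mul
      ((hv.mul hw).add ((hv.pow 2).div hden hden0)))).congr_deriv ?_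
  rw [Finset.sum_congr rfl fun i _ => pd_energyFlux hu ht i x]
  have hsum_deriv : ∑ i, ((2 : ℕ) * pd i (u t) x ^ (2 - 1) * pd i (tderiv u t) x)
      = 2 * ∑ i, pd i (u t) x * pd i (tderiv u t) x := by
    rw [Finset.mul_sum]
    exact Finset.sum_congr rfl fun i _ => by ring
  have hsum_div : ∑ i, ((pd i (tderiv u t) x + μ / (2 * (1 + t)) * pd i (u t) x) * pd i (u t) x
        + (tderiv u t x + μ / (2 * (1 + t)) * u t x) * pd i (pd i (u t)) x)
      = ∑ i, pd i (u t) x * pd i (tderiv u t) x + μ / (2 * (1 + t)) * gradSq (u t) x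
        + (tderiv u t x + μ / (2 * (1 + t)) * u t x) * lap (u t) x := by
    rw [gradSq, lap, Finset.mul_sum, Finset.mul_sum, ← Finset.sum_add_distrib,
      ← Finset.sum_add_distrib]
    exact Finset.sum_congr rfl fun i _ => by ring
  have htt : tderiv2 u t x = lap (u t) x - μ / (1 + t) * tderiv u t x := by linarith
  rw [hsum_deriv, hsum_div, htt]
  simp only [energyDensity, Pi.div_apply, Pi.mul_apply, Pi.pow_apply, Pi.add_apply]
  field_simp
  ring

variable (hK : IsCompact K) (hvanish : ∀ τ ∈ Ioo 0 T, ∀ x ∉ K, u τ x = 0)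
include hK hvanish

theorem E2_eq_integral_energyDensity {t : ℝ} (ht : t ∈ Ioo 0 T) :
    E2 μ u t = ∫ x, energyDensity μ u t x := by
  have hv : Continuous (u t) := (hu.contDiff_slice_snd ht.1).continuous
  have hw : Continuous (tderiv u t) :=
    ((contDiffOn_uncurry_tderiv isOpen_Ioi hu).contDiff_slice_snd ht.1).continuous
  have hg : ∀ i, Continuous (pd i (u t)) := fun i =>
    ((contDiffOn_pd isOpen_Ioi hu i).contDiff_slice_snd ht.1).continuous
  have hint : ∀ f : (Fin n → ℝ) → ℝ, Continuous f → (∀ x ∉ K, f x = 0) → Integrable f :=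
    fun f hf hfK => hf.integrable_of_hasCompactSupport (.intro hK hfK)
  rw [E2, E0, E1, ← integral_const_mul, ← integral_const_mul, ← integral_add]
  · rfl
  · refine (hint _ ?_ fun x hx => ?_).const_mul _
    · unfold gradSq; fun_prop
    · simp [gradSq, tderiv_eq_zero_of_notMem hvanish ht hx,
        pd_eq_zero_of_notMem hK.isClosed hvanish ht _ hx]
  · refine (hint _ ?_ fun x hx => ?_).const_mul _
    · fun_prop
    · simp [hvanish t ht x hx]

theorem integral_deriv_energyDensity {t : ℝ} (ht : t ∈ Ioo 0 T)
    (hpde : ∀ x, tderiv2 u t x - lap (u t) x + μ / (1 + t) * tderiv u t x = 0) :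
    ∫ x, deriv (fun τ => energyDensity μ u τ x) t
      = -(μ / (1 + t)) * (∫ x, energyDensity μ u t x)
        - μ * (2 - μ) / (4 * (1 + t) ^ 3) * ∫ x, (u t x) ^ 2 := by
  have hint : ∀ f : (Fin n → ℝ) → ℝ, Continuous f → HasCompactSupport f → Integrable f :=
    fun f hf hfc => hf.integrable_of_hasCompactSupport hfc
  have hflux : ∀ i, HasCompactSupport (energyFlux μ u t i) := fun i =>
    .intro hK fun x hx => energyFlux_eq_zero_of_notMem hvanish ht i hx
  have hdiv : ∀ i, Integrable (pd i (energyFlux μ u t i)) := fun i =>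
    hint _ (((contDiff_energyFlux hu ht.1 i).continuous_fderiv one_ne_zero).clm_apply
      continuous_const) ((hflux i).fderiv_apply (𝕜 := ℝ) _)
  have he : Integrable (energyDensity μ u t) :=
    hint _ ((contDiffOn_energyDensity hu).contDiff_slice_snd ht.1).continuous
      (.intro hK fun x hx => energyDensity_eq_zero_of_notMem hK.isClosed hvanish ht hx)
  have hu2 : Integrable fun x => (u t x) ^ 2 :=
    hint _ ((hu.contDiff_slice_snd ht.1).continuous.pow 2)
      (.intro hK fun x hx => by simp [hvanish t ht x hx])
  rw [integral_congr_ae (.of_forall fun x => (hasDerivAt_energyDensity hu ht.1 x (hpde x)).deriv),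
    integral_add ((he.const_mul _).sub' (hu2.const_mul _))
      (integrable_finsetSum _ fun i _ => hdiv i),
    integral_sub (he.const_mul _) (hu2.const_mul _), integral_const_mul, integral_const_mul,
    integral_finsetSum _ fun i _ => hdiv i]
  simp [pd, integral_fderiv_apply_eq_zero (contDiff_energyFlux hu ht.1 _) (hflux _)]

end Energy

theorem statement5_general (n : ℕ) (μ : ℝ)
    (u : ℝ → (Fin n → ℝ) → ℝ) (hu : IsSol n μ u) :
    ∀ t : ℝ, 0 < t →
      HasDerivAt (fun τ => E2 μ u τ)
        (-((μ / (1 + t)) * E2 μ u t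
          + (μ * (2 - μ) / (4 * (1 + t) ^ 3)) * ∫ x, (u t x) ^ 2)) t := by
  intro t ht
  obtain ⟨hC2, hpde, hsupp⟩ := hu
  have hu : ContDiffOn ℝ 2 (uncurry u) (Ioi 0 ×ˢ univ) :=
    hC2.mono (prod_mono Ioi_subset_Ici_self subset_rfl)
  obtain ⟨K, hK, hKu⟩ := hsupp (t + 1) (by linarith)
  have hvanish : ∀ τ ∈ Ioo 0 (t + 1), ∀ x ∉ K, u τ x = 0 := fun τ hτ =>
    hKu τ (Ioo_subset_Icc_self hτ)
  have htT : t ∈ Ioo 0 (t + 1) := ⟨ht, by linarith⟩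
  have hE2 : (fun τ => E2 μ u τ) =ᶠ[𝓝 t] fun τ => ∫ x, energyDensity μ u τ x :=
    eventually_of_mem (isOpen_Ioo.mem_nhds htT) fun τ hτ =>
      E2_eq_integral_energyDensity hu hK hvanish hτ
  have hderiv := hasDerivAt_integral_of_contDiffOn (ν := volume) isOpen_Ioo
    ((contDiffOn_energyDensity (μ := μ) hu).mono (prod_mono Ioo_subset_Ioi_self subset_rfl)) hK
    (fun τ hτ x hx => energyDensity_eq_zero_of_notMem hK.isClosed hvanish hτ hx) htT
  simp only [uncurry_apply_pair] at hderiv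
  refine (hderiv.congr_of_eventuallyEq hE2).congr_deriv ?_
  rw [integral_deriv_energyDensity hu hK hvanish htT (hpde t ht.le),
    E2_eq_integral_energyDensity hu hK hvanish htT]
  ring

theorem statement5 (n : ℕ) (hn : 1 ≤ n) (μ : ℝ) (hμ0 : 0 < μ) (hμ2 : μ < 2)
    (u : ℝ → (Fin n → ℝ) → ℝ) (hu : IsSol n μ u) :
    ∀ t : ℝ, 0 < t →
      HasDerivAt (fun τ => E2 μ u τ)
        (-((μ / (1 + t)) * E2 μ u t
          + (μ * (2 - μ) / (4 * (1 + t) ^ 3)) * ∫ x, (u t x) ^ 2)) t :=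
  statement5_general n μ u hu
end
end

section
/- Let n ≥ 1, μ = 2, η ∈ (0,2), and let u be a classical compactly supported solution of the linear damped wave equation ∂_t²u − Δu + (2/(1+t))∂_t u = 0 on [0,∞) × ℝⁿ. Define E₀(t) := (1/2)∫_{ℝⁿ}( |∇_x u|² + (∂_t u)² ) dx, E₅(t) := ∫_{ℝⁿ}( u ∂_t u + (1+η) u²/(2(1+t)) ) dx, and E₆(t) := E₀(t) + ((2−η)/(2(1+t))) E₅(t). Then E₆ is differentiable on (0,∞) and satisfies, for all t > 0: d/dt E₆(t) + ((2−η)/(1+t)) E₆(t) + (η(1+η)(2−η)/(4(1+t)³)) ∫_{ℝⁿ} u(t,x)² dx + (η/(1+t)) ∫_{ℝⁿ} (∂_t u(t,x))² dx = 0. -/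
open MeasureTheory Real Set

noncomputable section

/-- The functional `E₅(t) = ∫ ( u ∂ₜu + (1+η) u²/(2(1+t)) ) dx`. -/
def E5 {n : ℕ} (η : ℝ) (u : ℝ → (Fin n → ℝ) → ℝ) (t : ℝ) : ℝ :=
  ∫ x, (u t x * tderiv u t x + (1 + η) * (u t x) ^ 2 / (2 * (1 + t)))

/-- `E₆(t) = E₀(t) + ((2−η)/(2(1+t))) E₅(t)`. -/
def E6 {n : ℕ} (η : ℝ) (u : ℝ → (Fin n → ℝ) → ℝ) (t : ℝ) : ℝ :=
  E0 u t + ((2 - η) / (2 * (1 + t))) * E5 η u t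

/-!
Differentiate `E₀` and `E₅` under the integral sign (for times near `t` the integrands are
continuous and supported in one compact set), replace `∂ₜ²u` by `Δu − (μ/(1+t)) ∂ₜu`, and
integrate by parts in `x`: `∫ ∇u·∇∂ₜu = −∫ Δu ∂ₜu` and `∫ u Δu = −∫ |∇u|²`. This gives
`E₀' = −(μ/(1+t)) ∫ (∂ₜu)²` and
`E₅' = ∫ (∂ₜu)² − ∫ |∇u|² + ((1+η−μ)/(1+t)) ∫ u ∂ₜu − ((1+η)/(2(1+t)²)) ∫ u²`;
for `μ = 2` the identity for `E₆ = E₀ + ((2−η)/(2(1+t))) E₅` is then algebra.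
-/

open Filter Topology Function

section ParametricIntegral

variable {X : Type*} [TopologicalSpace X] [MeasurableSpace X] [OpensMeasurableSpace X]
  {μ : Measure X} [IsFiniteMeasureOnCompacts μ]

theorem integrable_mul_of_hasCompactSupport_left {f g : X → ℝ} (hf : Continuous f)
    (hg : Continuous g) (hfs : HasCompactSupport f) : Integrable (fun x => f x * g x) μ :=
  (hf.mul hg).integrable_of_hasCompactSupport hfs.mul_right

theorem hasDerivAt_integral_of_isCompact [T2Space X] {F F' : ℝ → X → ℝ} {a b t : ℝ}
    (ht : t ∈ Ioo a b) {K : Set X} (hK : IsCompact K)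
    (hF : ContinuousOn (uncurry F) (Ioo a b ×ˢ univ))
    (hF' : ContinuousOn (uncurry F') (Ioo a b ×ˢ univ))
    (hderiv : ∀ τ ∈ Ioo a b, ∀ x, HasDerivAt (F · x) (F' τ x) τ)
    (hsupp : ∀ τ ∈ Ioo a b, ∀ x ∉ K, F τ x = 0) :
    HasDerivAt (fun τ => ∫ x, F τ x ∂μ) (∫ x, F' t x ∂μ) t := by
  have hslice : ∀ {G : ℝ → X → ℝ}, ContinuousOn (uncurry G) (Ioo a b ×ˢ univ) →
      ∀ τ ∈ Ioo a b, Continuous (G τ) := fun hG τ hτ =>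
    hG.comp_continuous (continuous_const.prodMk continuous_id) fun x => ⟨hτ, trivial⟩
  -- `F' τ x` is the derivative of a function vanishing near `τ`, so `C · 1_K` dominates it.
  have hsupp' : ∀ τ ∈ Ioo a b, ∀ x ∉ K, F' τ x = 0 := fun τ hτ x hx =>
    (hderiv τ hτ x).unique <| (hasDerivAt_const τ (0 : ℝ)).congr_of_eventuallyEq <| by
      filter_upwards [isOpen_Ioo.mem_nhds hτ] with s hs using hsupp s hs x hx
  obtain ⟨ε, hε, hball⟩ := Metric.isOpen_iff.1 isOpen_Ioo t ht
  have hclosed : Metric.closedBall t (ε / 2) ⊆ Ioo a b :=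
    (Metric.closedBall_subset_ball (half_lt_self hε)).trans hball
  obtain ⟨C, hC⟩ := ((isCompact_closedBall t (ε / 2)).prod hK).exists_bound_of_continuousOn
    (hF'.mono (prod_mono hclosed (subset_univ K)))
  have hbound : ∀ x, ∀ τ ∈ Metric.ball t (ε / 2), ‖F' τ x‖ ≤ K.indicator (fun _ => C) x := by
    intro x τ hτ
    by_cases hx : x ∈ K
    · rw [indicator_of_mem hx]
      exact hC (τ, x) ⟨Metric.ball_subset_closedBall hτ, hx⟩
    · rw [indicator_of_notMem hx, hsupp' τ (hclosed (Metric.ball_subset_closedBall hτ)) x hx,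
        norm_zero]
  refine (hasDerivAt_integral_of_dominated_loc_of_deriv_le (Metric.ball_mem_nhds t (half_pos hε))
    ?_ ?_ (hslice hF' t ht).aestronglyMeasurable (ae_of_all _ hbound)
    ((integrableOn_const hK.measure_lt_top.ne).integrable_indicator hK.measurableSet) ?_).2
  · filter_upwards [isOpen_Ioo.mem_nhds ht] with τ hτ using (hslice hF τ hτ).aestronglyMeasurable
  · exact (hslice hF t ht).integrable_of_hasCompactSupport
      (HasCompactSupport.intro hK (hsupp t ht))
  · exact ae_of_all _ fun x τ hτ => hderiv τ (hclosed (Metric.ball_subset_closedBall hτ)) x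

end ParametricIntegral

section IntegrationByParts

variable {n : ℕ}

theorem contDiff_pd {m : WithTop ℕ∞} {f : (Fin n → ℝ) → ℝ} (hf : ContDiff ℝ (m + 1) f)
    (i : Fin n) : ContDiff ℝ m (pd i f) :=
  (hf.fderiv_right le_rfl).clm_apply contDiff_const

theorem HasCompactSupport.pd {f : (Fin n → ℝ) → ℝ} (hf : HasCompactSupport f) (i : Fin n) :
    HasCompactSupport (pd i f) :=
  hf.fderiv_apply ℝ _

theorem continuous_lap {f : (Fin n → ℝ) → ℝ} (hf : ContDiff ℝ 2 f) : Continuous (lap f) :=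
  continuous_finsetSum _ fun i _ =>
    (contDiff_pd (m := 0) (contDiff_pd (m := 1) hf i) i).continuous

theorem integral_mul_pd_eq_neg {f g : (Fin n → ℝ) → ℝ} (hf : ContDiff ℝ 1 f)
    (hg : ContDiff ℝ 1 g) (hfs : HasCompactSupport f) (i : Fin n) :
    ∫ x, f x * pd i g x = -∫ x, pd i f x * g x :=
  integral_mul_fderiv_eq_neg_fderiv_mul_of_integrable
    (integrable_mul_of_hasCompactSupport_left (contDiff_pd (m := 0) hf i).continuous
      hg.continuous (hfs.pd i))
    (integrable_mul_of_hasCompactSupport_left hf.continuous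
      (contDiff_pd (m := 0) hg i).continuous hfs)
    (integrable_mul_of_hasCompactSupport_left hf.continuous hg.continuous hfs)
    (fun x _ => hf.differentiable one_ne_zero x) (fun x _ => hg.differentiable one_ne_zero x)

theorem integral_sum_pd_mul_pd {f g : (Fin n → ℝ) → ℝ} (hf : ContDiff ℝ 2 f)
    (hg : ContDiff ℝ 1 g) (hfs : HasCompactSupport f) :
    ∫ x, ∑ i, pd i f x * pd i g x = -∫ x, lap f x * g x := by
  have hpd : ∀ i, ContDiff ℝ 1 (pd i f) := contDiff_pd hf
  simp only [lap, Finset.sum_mul]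
  rw [integral_finsetSum, integral_finsetSum, ← Finset.sum_neg_distrib]
  · exact Finset.sum_congr rfl fun i _ => integral_mul_pd_eq_neg (hpd i) hg (hfs.pd i) i
  · exact fun i _ => integrable_mul_of_hasCompactSupport_left
      (contDiff_pd (m := 0) (hpd i) i).continuous hg.continuous ((hfs.pd i).pd i)
  · exact fun i _ => integrable_mul_of_hasCompactSupport_left (hpd i).continuous
      (contDiff_pd (m := 0) hg i).continuous (hfs.pd i)

end IntegrationByParts

section SpaceTime

variable {n : ℕ} {w : ℝ → (Fin n → ℝ) → ℝ} {τ : ℝ} {x : Fin n → ℝ}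

theorem tderiv_tderiv (w : ℝ → (Fin n → ℝ) → ℝ) : tderiv (tderiv w) = tderiv2 w := rfl

theorem tderiv_eq_fderiv (h : DifferentiableAt ℝ (uncurry w) (τ, x)) :
    tderiv w τ x = fderiv ℝ (uncurry w) (τ, x) (1, 0) := by
  have := h.hasFDerivAt.comp_hasDerivAt τ ((hasDerivAt_id τ).prodMk (hasDerivAt_const τ x))
  exact this.deriv

theorem hasDerivAt_tderiv (h : DifferentiableAt ℝ (uncurry w) (τ, x)) :
    HasDerivAt (w · x) (tderiv w τ x) τ := by
  have := h.hasFDerivAt.comp_hasDerivAt τ ((hasDerivAt_id τ).prodMk (hasDerivAt_const τ x))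
  exact this.differentiableAt.hasDerivAt

theorem pd_eq_fderiv (h : DifferentiableAt ℝ (uncurry w) (τ, x)) (i : Fin n) :
    pd i (w τ) x = fderiv ℝ (uncurry w) (τ, x) (0, Pi.single i 1) := by
  change fderiv ℝ (uncurry w ∘ Prod.mk τ) x _ = _
  rw [(h.hasFDerivAt.comp x (hasFDerivAt_prodMk_right τ x)).fderiv]
  rfl

theorem pd_eq_zero_of_eqOn {g : (Fin n → ℝ) → ℝ} {s : Set (Fin n → ℝ)} (hs : IsOpen s)
    (h : EqOn g 0 s) (hx : x ∈ s) (i : Fin n) : pd i g x = 0 := by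
  rw [pd, (h.eventuallyEq_of_mem (hs.mem_nhds hx)).fderiv_eq]
  simp

theorem tderiv_eq_zero_of_eqOn {s : Set ℝ} (hs : IsOpen s) (h : EqOn (w · x) 0 s)
    (hτ : τ ∈ s) : tderiv w τ x = 0 := by
  rw [tderiv, (h.eventuallyEq_of_mem (hs.mem_nhds hτ)).deriv_eq]
  simp

variable {Ω : Set (ℝ × (Fin n → ℝ))} {k m : WithTop ℕ∞}

theorem ContDiffOn.hasDerivAt_tderiv (hw : ContDiffOn ℝ 1 (uncurry w) Ω) (hΩ : IsOpen Ω)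
    (hq : (τ, x) ∈ Ω) : HasDerivAt (w · x) (tderiv w τ x) τ :=
  _root_.hasDerivAt_tderiv ((hw.contDiffAt (hΩ.mem_nhds hq)).differentiableAt one_ne_zero)

theorem ContDiffOn.uncurry_tderiv (hw : ContDiffOn ℝ k (uncurry w) Ω) (hΩ : IsOpen Ω)
    (hmk : m + 1 ≤ k) : ContDiffOn ℝ m (uncurry (tderiv w)) Ω :=
  ((hw.fderiv_of_isOpen hΩ hmk).clm_apply contDiffOn_const).congr fun q hq => tderiv_eq_fderiv
    ((hw.contDiffAt (hΩ.mem_nhds hq)).differentiableAt (by rintro rfl; simp at hmk))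

theorem ContDiffOn.uncurry_pd (hw : ContDiffOn ℝ k (uncurry w) Ω) (hΩ : IsOpen Ω)
    (hmk : m + 1 ≤ k) (i : Fin n) : ContDiffOn ℝ m (uncurry fun s => pd i (w s)) Ω :=
  ((hw.fderiv_of_isOpen hΩ hmk).clm_apply contDiffOn_const).congr fun q hq => pd_eq_fderiv
    ((hw.contDiffAt (hΩ.mem_nhds hq)).differentiableAt (by rintro rfl; simp at hmk)) i

theorem ContDiffOn.contDiff_slice (hw : ContDiffOn ℝ k (uncurry w) Ω) (hτ : ∀ y, (τ, y) ∈ Ω) :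
    ContDiff ℝ k (w τ) :=
  hw.comp_contDiff (contDiff_const.prodMk contDiff_id) hτ

theorem tderiv_pd (hw : ContDiffOn ℝ 2 (uncurry w) Ω) (hΩ : IsOpen Ω) (hq : (τ, x) ∈ Ω)
    (i : Fin n) : tderiv (fun s => pd i (w s)) τ x = pd i (tderiv w τ) x := by
  have hw2 : ContDiffAt ℝ 2 (uncurry w) (τ, x) := hw.contDiffAt (hΩ.mem_nhds hq)
  have hD : DifferentiableAt ℝ (fderiv ℝ (uncurry w)) (τ, x) :=
    (hw2.fderiv_right (m := 1) (by norm_num)).differentiableAt one_ne_zero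
  have hsecond : ∀ {g : ℝ × (Fin n → ℝ) → ℝ} (v : ℝ × (Fin n → ℝ)),
      EqOn g (fun p => fderiv ℝ (uncurry w) p v) Ω → ∀ e,
      fderiv ℝ g (τ, x) e = fderiv ℝ (fderiv ℝ (uncurry w)) (τ, x) e v := by
    intro g v hg e
    rw [(hg.eventuallyEq_of_mem (hΩ.mem_nhds hq)).fderiv_eq,
      fderiv_clm_apply hD (differentiableAt_const v)]
    simp
  have h1 := hw.uncurry_pd hΩ (m := 1) (by norm_num) i
  have h2 := hw.uncurry_tderiv hΩ (m := 1) (by norm_num)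
  rw [tderiv_eq_fderiv ((h1.contDiffAt (hΩ.mem_nhds hq)).differentiableAt one_ne_zero),
    pd_eq_fderiv ((h2.contDiffAt (hΩ.mem_nhds hq)).differentiableAt one_ne_zero),
    hsecond (g := uncurry fun s => pd i (w s)) _ (fun p hp => pd_eq_fderiv ?_ i),
    hsecond (g := uncurry (tderiv w)) _ (fun p hp => tderiv_eq_fderiv ?_),
    hw2.isSymmSndFDerivAt (by simp)]
  all_goals exact (hw.contDiffAt (hΩ.mem_nhds hp)).differentiableAt two_ne_zero

end SpaceTime

section Solutions

variable {n : ℕ} {μ : ℝ} {u : ℝ → (Fin n → ℝ) → ℝ} {t : ℝ}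

theorem IsSol.contDiffOn (hu : IsSol n μ u) : ContDiffOn ℝ 2 (uncurry u) (Ioi 0 ×ˢ univ) :=
  hu.1.mono (prod_mono Ioi_subset_Ici_self subset_rfl)

theorem IsSol.exists_isCompact_support (hu : IsSol n μ u) (ht : 0 < t) :
    ∃ K, IsCompact K ∧ ∀ τ ∈ Ioo 0 t, ∀ x ∉ K, u τ x = 0 := by
  obtain ⟨K, hK, hKu⟩ := hu.2.2 t ht
  exact ⟨K, hK, fun τ hτ => hKu τ (Ioo_subset_Icc_self hτ)⟩

theorem IsSol.tderiv2_eq (hu : IsSol n μ u) (ht : 0 ≤ t) (x : Fin n → ℝ) :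
    tderiv2 u t x = lap (u t) x - μ / (1 + t) * tderiv u t x := by
  linarith [hu.2.1 t ht x]

theorem IsSol.contDiff_slice (hu : IsSol n μ u) (ht : 0 < t) : ContDiff ℝ 2 (u t) :=
  hu.contDiffOn.contDiff_slice fun _ => ⟨ht, trivial⟩

theorem IsSol.contDiff_tderiv_slice (hu : IsSol n μ u) (ht : 0 < t) :
    ContDiff ℝ 1 (tderiv u t) :=
  (hu.contDiffOn.uncurry_tderiv (isOpen_Ioi.prod isOpen_univ) (by norm_num)).contDiff_slice
    fun _ => ⟨ht, trivial⟩

theorem IsSol.hasCompactSupport (hu : IsSol n μ u) (ht : 0 < t) : HasCompactSupport (u t) := by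
  obtain ⟨K, hK, hKu⟩ := hu.exists_isCompact_support (t := t + 1) (by linarith)
  exact HasCompactSupport.intro hK fun x hx => hKu t ⟨ht, lt_add_one t⟩ x hx

theorem IsSol.hasCompactSupport_tderiv (hu : IsSol n μ u) (ht : 0 < t) :
    HasCompactSupport (tderiv u t) := by
  obtain ⟨K, hK, hKu⟩ := hu.exists_isCompact_support (t := t + 1) (by linarith)
  exact HasCompactSupport.intro hK fun x hx =>
    tderiv_eq_zero_of_eqOn isOpen_Ioo (fun τ hτ => hKu τ hτ x hx) ⟨ht, lt_add_one t⟩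

theorem IsSol.integrable_sq (hu : IsSol n μ u) (ht : 0 < t) :
    Integrable fun x => u t x ^ 2 := by
  have hf := (hu.contDiff_slice ht).continuous
  simpa only [sq] using integrable_mul_of_hasCompactSupport_left hf hf (hu.hasCompactSupport ht)

theorem IsSol.integrable_tderiv_sq (hu : IsSol n μ u) (ht : 0 < t) :
    Integrable fun x => tderiv u t x ^ 2 := by
  have hg := (hu.contDiff_tderiv_slice ht).continuous
  simpa only [sq] using
    integrable_mul_of_hasCompactSupport_left hg hg (hu.hasCompactSupport_tderiv ht)

theorem IsSol.integrable_mul_tderiv (hu : IsSol n μ u) (ht : 0 < t) :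
    Integrable fun x => u t x * tderiv u t x :=
  integrable_mul_of_hasCompactSupport_left (hu.contDiff_slice ht).continuous
    (hu.contDiff_tderiv_slice ht).continuous (hu.hasCompactSupport ht)

theorem IsSol.integrable_gradSq (hu : IsSol n μ u) (ht : 0 < t) :
    Integrable fun x => gradSq (u t) x := by
  refine integrable_finsetSum _ fun i _ => ?_
  have hpd := (contDiff_pd (m := 1) (hu.contDiff_slice ht) i).continuous
  simpa only [sq] using
    integrable_mul_of_hasCompactSupport_left hpd hpd ((hu.hasCompactSupport ht).pd i)

theorem IsSol.hasDerivAt_E0_eq_integral (hu : IsSol n μ u) (ht : 0 < t) :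
    HasDerivAt (E0 u) (∫ x, (∑ i, pd i (u t) x * pd i (tderiv u t) x
      + tderiv u t x * tderiv2 u t x)) t := by
  set Ω : Set (ℝ × (Fin n → ℝ)) := Ioo 0 (t + 1) ×ˢ univ
  have hΩ : IsOpen Ω := isOpen_Ioo.prod isOpen_univ
  have hu2 : ContDiffOn ℝ 2 (uncurry u) Ω :=
    hu.contDiffOn.mono (prod_mono Ioo_subset_Ioi_self subset_rfl)
  have hut := hu2.uncurry_tderiv hΩ (m := 1) (by norm_num)
  have hup := fun i => hu2.uncurry_pd hΩ (m := 1) (by norm_num) i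
  have hutt := (hut.uncurry_tderiv hΩ (m := 0) (by norm_num)).continuousOn
  have hupt := fun i => (hut.uncurry_pd hΩ (m := 0) (by norm_num) i).continuousOn
  obtain ⟨K, hK, hKu⟩ := hu.exists_isCompact_support (t := t + 1) (by linarith)
  unfold E0
  refine ((hasDerivAt_integral_of_isCompact (μ := volume) (F' := fun τ x =>
    2 * (∑ i, pd i (u τ) x * pd i (tderiv u τ) x + tderiv u τ x * tderiv2 u τ x))
    ⟨ht, lt_add_one t⟩ hK ?_ ?_ ?_ ?_).const_mul (1 / 2)).congr_deriv ?_
  · exact (continuousOn_finsetSum _ fun i _ => (hup i).continuousOn.pow 2).add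
      (hut.continuousOn.pow 2)
  · exact continuousOn_const.mul ((continuousOn_finsetSum _ fun i _ =>
      (hup i).continuousOn.mul (hupt i)).add (hut.continuousOn.mul hutt))
  · intro τ hτ x
    have hq : (τ, x) ∈ Ω := ⟨hτ, trivial⟩
    refine ((HasDerivAt.fun_sum fun i _ => ((hup i).hasDerivAt_tderiv hΩ hq).fun_pow 2).add
      ((hut.hasDerivAt_tderiv hΩ hq).fun_pow 2)).congr_deriv ?_
    norm_num [tderiv_pd hu2 hΩ hq, tderiv_tderiv, mul_add, mul_assoc, Finset.mul_sum]
  · intro τ hτ x hx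
    simp [gradSq, pd_eq_zero_of_eqOn hK.isClosed.isOpen_compl (fun y hy => hKu τ hτ y hy) hx,
      tderiv_eq_zero_of_eqOn isOpen_Ioo (fun s hs => hKu s hs x hx) hτ]
  · rw [integral_const_mul]
    ring

theorem IsSol.hasDerivAt_E5_eq_integral (hu : IsSol n μ u) (η : ℝ) (ht : 0 < t) :
    HasDerivAt (E5 η u) (∫ x, (tderiv u t x ^ 2 + u t x * tderiv2 u t x
      + (1 + η) / (1 + t) * (u t x * tderiv u t x)
      - (1 + η) / (2 * (1 + t) ^ 2) * u t x ^ 2)) t := by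
  set Ω : Set (ℝ × (Fin n → ℝ)) := Ioo 0 (t + 1) ×ˢ univ
  have hΩ : IsOpen Ω := isOpen_Ioo.prod isOpen_univ
  have hu2 : ContDiffOn ℝ 2 (uncurry u) Ω :=
    hu.contDiffOn.mono (prod_mono Ioo_subset_Ioi_self subset_rfl)
  have hu1 : ContDiffOn ℝ 1 (uncurry u) Ω := hu2.of_le one_le_two
  have hut := hu2.uncurry_tderiv hΩ (m := 1) (by norm_num)
  have hutt := (hut.uncurry_tderiv hΩ (m := 0) (by norm_num)).continuousOn
  have hs : ContinuousOn (fun q : ℝ × (Fin n → ℝ) => 1 + q.1) Ω :=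
    (continuous_const.add continuous_fst).continuousOn
  have hs0 : ∀ q ∈ Ω, 1 + q.1 ≠ 0 := fun q hq => by linarith [hq.1.1]
  obtain ⟨K, hK, hKu⟩ := hu.exists_isCompact_support (t := t + 1) (by linarith)
  unfold E5
  refine hasDerivAt_integral_of_isCompact (μ := volume) (F' := fun τ x =>
    tderiv u τ x ^ 2 + u τ x * tderiv2 u τ x + (1 + η) / (1 + τ) * (u τ x * tderiv u τ x)
      - (1 + η) / (2 * (1 + τ) ^ 2) * u τ x ^ 2) ⟨ht, lt_add_one t⟩ hK ?_ ?_ ?_ ?_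
  · exact (hu1.continuousOn.mul hut.continuousOn).add
      ((continuousOn_const.mul (hu1.continuousOn.pow 2)).div (continuousOn_const.mul hs)
        fun q hq => mul_ne_zero two_ne_zero (hs0 q hq))
  · exact (((hut.continuousOn.pow 2).add (hu1.continuousOn.mul hutt)).add
      ((continuousOn_const.div hs hs0).mul (hu1.continuousOn.mul hut.continuousOn))).sub
      ((continuousOn_const.div (continuousOn_const.mul (hs.pow 2))
        fun q hq => mul_ne_zero two_ne_zero (pow_ne_zero 2 (hs0 q hq))).mul
        (hu1.continuousOn.pow 2))
  · intro τ hτ x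
    have hq : (τ, x) ∈ Ω := ⟨hτ, trivial⟩
    have hτ0 := hs0 _ hq
    have hu' := hu1.hasDerivAt_tderiv hΩ hq
    refine ((hu'.mul (hut.hasDerivAt_tderiv hΩ hq)).add
      (((hu'.fun_pow 2).const_mul (1 + η)).fun_div
        (((hasDerivAt_id' τ).const_add 1).const_mul 2) (mul_ne_zero two_ne_zero hτ0))).congr_deriv ?_
    simp only [tderiv_tderiv]
    field_simp
    ring
  · intro τ hτ x hx
    simp [hKu τ hτ x hx]
theorem IsSol.hasDerivAt_E0 (hu : IsSol n μ u) (ht : 0 < t) :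
    HasDerivAt (E0 u) (-(μ / (1 + t)) * ∫ x, tderiv u t x ^ 2) t := by
  have hf := hu.contDiff_slice ht
  have hg := hu.contDiff_tderiv_slice ht
  have hfs := hu.hasCompactSupport ht
  have hgrad : Integrable fun x => ∑ i, pd i (u t) x * pd i (tderiv u t) x :=
    integrable_finsetSum _ fun i _ => integrable_mul_of_hasCompactSupport_left
      (contDiff_pd (m := 1) hf i).continuous (contDiff_pd (m := 0) hg i).continuous (hfs.pd i)
  have hlap : Integrable fun x => lap (u t) x * tderiv u t x := by
    simpa only [mul_comm] using integrable_mul_of_hasCompactSupport_left hg.continuous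
      (continuous_lap hf) (hu.hasCompactSupport_tderiv ht)
  refine (hu.hasDerivAt_E0_eq_integral ht).congr_deriv ?_
  calc ∫ x, (∑ i, pd i (u t) x * pd i (tderiv u t) x + tderiv u t x * tderiv2 u t x)
      = ∫ x, (∑ i, pd i (u t) x * pd i (tderiv u t) x + lap (u t) x * tderiv u t x
          - μ / (1 + t) * tderiv u t x ^ 2) := by
        refine integral_congr_ae (ae_of_all _ fun x => ?_)
        simp only [hu.tderiv2_eq ht.le]
        ring
    _ = -(μ / (1 + t)) * ∫ x, tderiv u t x ^ 2 := by
        rw [integral_sub (hgrad.fun_add hlap) ((hu.integrable_tderiv_sq ht).const_mul _),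
          integral_add hgrad hlap, integral_const_mul, integral_sum_pd_mul_pd hf hg hfs]
        ring

theorem IsSol.hasDerivAt_E5 (hu : IsSol n μ u) (η : ℝ) (ht : 0 < t) :
    HasDerivAt (E5 η u) ((∫ x, tderiv u t x ^ 2) - (∫ x, gradSq (u t) x)
      + (1 + η - μ) / (1 + t) * (∫ x, u t x * tderiv u t x)
      - (1 + η) / (2 * (1 + t) ^ 2) * ∫ x, u t x ^ 2) t := by
  have hf := hu.contDiff_slice ht
  have hsq := hu.integrable_tderiv_sq ht
  have hlap : Integrable fun x => lap (u t) x * u t x := by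
    simpa only [mul_comm] using integrable_mul_of_hasCompactSupport_left hf.continuous
      (continuous_lap hf) (hu.hasCompactSupport ht)
  have hmix := (hu.integrable_mul_tderiv ht).const_mul ((1 + η - μ) / (1 + t))
  refine (hu.hasDerivAt_E5_eq_integral η ht).congr_deriv ?_
  calc ∫ x, (tderiv u t x ^ 2 + u t x * tderiv2 u t x
        + (1 + η) / (1 + t) * (u t x * tderiv u t x) - (1 + η) / (2 * (1 + t) ^ 2) * u t x ^ 2)
      = ∫ x, (tderiv u t x ^ 2 + lap (u t) x * u t x
          + (1 + η - μ) / (1 + t) * (u t x * tderiv u t x)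
          - (1 + η) / (2 * (1 + t) ^ 2) * u t x ^ 2) := by
        refine integral_congr_ae (ae_of_all _ fun x => ?_)
        simp only [hu.tderiv2_eq ht.le]
        ring
    _ = _ := by
        rw [integral_sub ((hsq.fun_add hlap).fun_add hmix) ((hu.integrable_sq ht).const_mul _),
          integral_add (hsq.fun_add hlap) hmix, integral_add hsq hlap, integral_const_mul,
          integral_const_mul, ← neg_neg (∫ x, lap (u t) x * u t x),
          ← integral_sum_pd_mul_pd hf (hf.of_le one_le_two) (hu.hasCompactSupport ht)]
        simp only [gradSq, sq]
        ring

theorem IsSol.E0_eq (hu : IsSol n μ u) (ht : 0 < t) :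
    E0 u t = 1 / 2 * ((∫ x, gradSq (u t) x) + ∫ x, tderiv u t x ^ 2) := by
  rw [E0, integral_add (hu.integrable_gradSq ht) (hu.integrable_tderiv_sq ht)]

theorem IsSol.E5_eq (hu : IsSol n μ u) (η : ℝ) (ht : 0 < t) :
    E5 η u t = (∫ x, u t x * tderiv u t x) + (1 + η) / (2 * (1 + t)) * ∫ x, u t x ^ 2 := by
  rw [E5, ← integral_const_mul, ← integral_add (hu.integrable_mul_tderiv ht)
    ((hu.integrable_sq ht).const_mul _)]
  refine integral_congr_ae (ae_of_all _ fun x => ?_)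
  ring

end Solutions

theorem statement10_general (n : ℕ) (η : ℝ)
    (u : ℝ → (Fin n → ℝ) → ℝ) (hu : IsSol n 2 u) :
    ∀ t : ℝ, 0 < t →
      HasDerivAt (fun τ => E6 η u τ)
        (-(((2 - η) / (1 + t)) * E6 η u t
          + (η * (1 + η) * (2 - η) / (4 * (1 + t) ^ 3)) * (∫ x, (u t x) ^ 2)
          + (η / (1 + t)) * ∫ x, (tderiv u t x) ^ 2)) t := by
  intro t ht
  have hs : 2 * (1 + t) ≠ 0 := by positivity
  have hcoef := (hasDerivAt_const t (2 - η)).fun_div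
    (((hasDerivAt_id' t).const_add 1).const_mul 2) hs
  refine ((hu.hasDerivAt_E0 ht).add (hcoef.mul (hu.hasDerivAt_E5 η ht))).congr_deriv ?_
  rw [E6, hu.E0_eq ht, hu.E5_eq η ht]
  field_simp
  ring

theorem statement10 (n : ℕ) (hn : 1 ≤ n) (η : ℝ) (hη0 : 0 < η) (hη2 : η < 2)
    (u : ℝ → (Fin n → ℝ) → ℝ) (hu : IsSol n 2 u) :
    ∀ t : ℝ, 0 < t →
      HasDerivAt (fun τ => E6 η u τ)
        (-(((2 - η) / (1 + t)) * E6 η u t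
          + (η * (1 + η) * (2 - η) / (4 * (1 + t) ^ 3)) * (∫ x, (u t x) ^ 2)
          + (η / (1 + t)) * ∫ x, (tderiv u t x) ^ 2)) t :=
  statement10_general n η u hu
end
end

section
/- Let p ≥ 2 be a real number and let F : ℝ → ℝ be either F(s) = |s|^p or F(s) = |s|^{p−1}s. There exists a constant C > 0 depending only on p such that for all functions u, v : ℝⁿ → ℝ differentiable at a point x ∈ ℝⁿ, the compositions F∘u and F∘v are differentiable at x and ‖∇(F∘u)(x) − ∇(F∘v)(x)‖ ≤ C |u(x)|^{p−1} ‖∇u(x) − ∇v(x)‖ + C ‖∇v(x)‖ ( |u(x)|^{p−2} + |v(x)|^{p−2} ) |u(x) − v(x)|. -/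
/-!
Differentiating `F ∘ u` and `F ∘ v` by the chain rule and writing
`F'(u) ∇u - F'(v) ∇v = F'(u) (∇u - ∇v) + (F'(u) - F'(v)) ∇v`, it suffices that
`|F'(s)| ≲ |s|^(p-1)` and `|F'(a) - F'(b)| ≲ (|a|^(p-2) + |b|^(p-2)) |a - b|`.
Here `F'` is a multiple of `|s|^(p-2) s` or of `|s|^(p-1)`, and the second estimate follows
from the mean value theorem applied to `t ↦ |t|^(q-1) t`, whose derivative `q |t|^(q-1)` is
bounded on the segment between `a` and `b` by `q (|a|^(q-1) + |b|^(q-1))`.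
-/

open Real Filter Topology

theorem hasDerivAt_abs_rpow_sub_one_mul_self {q : ℝ} (hq : 1 ≤ q) (s : ℝ) :
    HasDerivAt (fun t : ℝ => |t| ^ (q - 1) * t) (q * |s| ^ (q - 1)) s := by
  rcases hq.eq_or_lt with rfl | hq
  · simpa using hasDerivAt_id' s
  have hq₀ : q - 1 ≠ 0 := by linarith
  rcases ne_or_eq s 0 with hs | rfl
  · refine (((hasDerivAt_abs hs).rpow_const (Or.inl (abs_ne_zero.2 hs))).mul
      (hasDerivAt_id' s)).congr_deriv ?_
    have hsign : (SignType.sign s : ℝ) * s = |s| := by rw [mul_comm, self_mul_sign]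
    have hpow : |s| ^ (q - 1 - 1) * |s| = |s| ^ (q - 1) := by
      rw [rpow_sub_one (abs_ne_zero.2 hs), div_mul_cancel₀ _ (abs_ne_zero.2 hs)]
    linear_combination (q - 1) * |s| ^ (q - 1 - 1) * hsign + (q - 1) * hpow
  · rw [abs_zero, zero_rpow hq₀, mul_zero, hasDerivAt_iff_tendsto_slope]
    have hlim : Tendsto (fun t : ℝ => |t| ^ (q - 1)) (𝓝 0) (𝓝 0) := by
      have hcont : Continuous (fun t : ℝ => |t| ^ (q - 1)) :=
        continuous_abs.rpow_const fun _ => Or.inr (by linarith)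
      simpa only [abs_zero, zero_rpow hq₀] using hcont.tendsto 0
    refine (hlim.mono_left nhdsWithin_le_nhds).congr' ?_
    filter_upwards [self_mem_nhdsWithin] with t (ht : t ≠ 0)
    simp [slope_def_field, ht]

theorem abs_sub_le_of_abs_deriv_le_mul_abs_rpow {G G' : ℝ → ℝ} {K r : ℝ}
    (hG : ∀ t, HasDerivAt G (G' t) t) (hr : 0 ≤ r) (hG' : ∀ t, |G' t| ≤ K * |t| ^ r)
    (a b : ℝ) : |G a - G b| ≤ K * (|a| ^ r + |b| ^ r) * |a - b| := by
  have hK : 0 ≤ K := by simpa using (abs_nonneg _).trans (hG' 1)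
  have bound : ∀ t ∈ Set.uIcc b a, ‖G' t‖ ≤ K * (|a| ^ r + |b| ^ r) := fun t ht => by
    have ht' : |t| ≤ max |a| |b| := by
      rcases Set.mem_uIcc.1 ht with ⟨h₁, h₂⟩ | ⟨h₁, h₂⟩
      · exact (abs_le_max_abs_abs h₁ h₂).trans_eq (max_comm _ _)
      · exact abs_le_max_abs_abs h₁ h₂
    have hpow : |t| ^ r ≤ |a| ^ r + |b| ^ r := by
      rcases le_max_iff.1 ht' with h | h
      · exact (rpow_le_rpow (abs_nonneg t) h hr).trans (le_add_of_nonneg_right (by positivity))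
      · exact (rpow_le_rpow (abs_nonneg t) h hr).trans (le_add_of_nonneg_left (by positivity))
    exact (hG' t).trans (mul_le_mul_of_nonneg_left hpow hK)
  simpa only [Real.norm_eq_abs] using Convex.norm_image_sub_le_of_norm_hasDerivWithin_le
    (fun t _ => (hG t).hasDerivWithinAt) bound (convex_uIcc b a) Set.left_mem_uIcc
    Set.right_mem_uIcc

theorem abs_abs_rpow_sub_one_mul_self_sub_le {q : ℝ} (hq : 1 ≤ q) (a b : ℝ) :
    |(|a| ^ (q - 1) * a) - |b| ^ (q - 1) * b|
      ≤ q * (|a| ^ (q - 1) + |b| ^ (q - 1)) * |a - b| :=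
  abs_sub_le_of_abs_deriv_le_mul_abs_rpow (hasDerivAt_abs_rpow_sub_one_mul_self hq)
    (by linarith) (fun t => by
      rw [abs_mul, abs_of_nonneg (by linarith), abs_of_nonneg (by positivity)]) a b

theorem abs_abs_rpow_sub_abs_rpow_le {q : ℝ} (hq : 1 ≤ q) (a b : ℝ) :
    |(|a| ^ q) - |b| ^ q| ≤ q * (|a| ^ (q - 1) + |b| ^ (q - 1)) * |a - b| := by
  have hpow : ∀ t : ℝ, |t| ^ q = |(|t|)| ^ (q - 1) * |t| := fun t => by
    rw [abs_abs, ← rpow_add_one' (abs_nonneg t) (by linarith), sub_add_cancel]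
  calc |(|a| ^ q) - |b| ^ q| ≤ q * (|a| ^ (q - 1) + |b| ^ (q - 1)) * |(|a|) - (|b|)| := by
        simpa only [hpow, abs_abs] using abs_abs_rpow_sub_one_mul_self_sub_le hq |a| |b|
    _ ≤ q * (|a| ^ (q - 1) + |b| ^ (q - 1)) * |a - b| :=
        mul_le_mul_of_nonneg_left (abs_abs_sub_abs_le_abs_sub a b)
          (mul_nonneg (by linarith) (by positivity))

structure HasPowerGrowthDeriv (F F' : ℝ → ℝ) (p K : ℝ) : Prop where
  hasDerivAt : ∀ s, HasDerivAt F (F' s) s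
  abs_le : ∀ s, |F' s| ≤ K * |s| ^ (p - 1)
  abs_sub_le : ∀ a b, |F' a - F' b| ≤ K * (|a| ^ (p - 2) + |b| ^ (p - 2)) * |a - b|

section PowerFunctions

variable {p : ℝ}

theorem hasPowerGrowthDeriv_abs_rpow (hp : 2 ≤ p) :
    HasPowerGrowthDeriv (fun s => |s| ^ p) (fun s => p * (|s| ^ (p - 1 - 1) * s)) p (p ^ 2) where
  hasDerivAt s := by
    simpa only [sub_sub, one_add_one_eq_two, mul_assoc] using hasDerivAt_abs_rpow s (by linarith)
  abs_le s := by
    rw [abs_mul, abs_mul, abs_of_nonneg (by linarith), abs_of_nonneg (by positivity),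
      ← rpow_add_one' (abs_nonneg s) (by linarith), sub_add_cancel]
    gcongr
    nlinarith
  abs_sub_le a b := by
    rw [← mul_sub, abs_mul, abs_of_nonneg (by linarith)]
    calc p * |(|a| ^ (p - 1 - 1) * a) - |b| ^ (p - 1 - 1) * b|
        ≤ p * ((p - 1) * (|a| ^ (p - 2) + |b| ^ (p - 2)) * |a - b|) := by
          gcongr
          simpa only [sub_sub, one_add_one_eq_two] using
            abs_abs_rpow_sub_one_mul_self_sub_le (q := p - 1) (by linarith) a b
      _ = p * (p - 1) * ((|a| ^ (p - 2) + |b| ^ (p - 2)) * |a - b|) := by ring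
      _ ≤ p ^ 2 * (|a| ^ (p - 2) + |b| ^ (p - 2)) * |a - b| := by
          rw [mul_assoc (p ^ 2)]
          gcongr
          nlinarith

theorem hasPowerGrowthDeriv_abs_rpow_sub_one_mul_self (hp : 2 ≤ p) :
    HasPowerGrowthDeriv (fun s => |s| ^ (p - 1) * s) (fun s => p * |s| ^ (p - 1)) p (p ^ 2) where
  hasDerivAt := hasDerivAt_abs_rpow_sub_one_mul_self (by linarith)
  abs_le s := by
    rw [abs_mul, abs_of_nonneg (by linarith), abs_of_nonneg (by positivity)]
    gcongr
    nlinarith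
  abs_sub_le a b := by
    rw [← mul_sub, abs_mul, abs_of_nonneg (by linarith)]
    calc p * |(|a| ^ (p - 1)) - |b| ^ (p - 1)|
        ≤ p * ((p - 1) * (|a| ^ (p - 2) + |b| ^ (p - 2)) * |a - b|) := by
          gcongr
          simpa only [sub_sub, one_add_one_eq_two] using
            abs_abs_rpow_sub_abs_rpow_le (q := p - 1) (by linarith) a b
      _ = p * (p - 1) * ((|a| ^ (p - 2) + |b| ^ (p - 2)) * |a - b|) := by ring
      _ ≤ p ^ 2 * (|a| ^ (p - 2) + |b| ^ (p - 2)) * |a - b| := by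
          rw [mul_assoc (p ^ 2)]
          gcongr
          nlinarith

end PowerFunctions

section Gradient

variable {E : Type*} [NormedAddCommGroup E] [InnerProductSpace ℝ E] [CompleteSpace E]

theorem norm_smul_sub_smul_le {E : Type*} [SeminormedAddCommGroup E] [NormedSpace ℝ E]
    (a b : ℝ) (g h : E) : ‖a • g - b • h‖ ≤ |a| * ‖g - h‖ + |a - b| * ‖h‖ := by
  calc ‖a • g - b • h‖ = ‖a • (g - h) + (a - b) • h‖ := by
        rw [smul_sub, sub_smul, sub_add_sub_cancel]
    _ ≤ |a| * ‖g - h‖ + |a - b| * ‖h‖ := by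
        simpa only [norm_smul, Real.norm_eq_abs] using norm_add_le (a • (g - h)) ((a - b) • h)

theorem HasDerivAt.comp_hasGradientAt {F : ℝ → ℝ} {F' : ℝ} {u : E → ℝ} {g x : E}
    (hF : HasDerivAt F F' (u x)) (hu : HasGradientAt u g x) :
    HasGradientAt (F ∘ u) (F' • g) x := by
  rw [hasGradientAt_iff_hasFDerivAt] at hu ⊢
  simpa [map_smul] using hF.comp_hasFDerivAt x hu

theorem HasPowerGrowthDeriv.norm_gradient_comp_sub_le {F F' : ℝ → ℝ} {p K : ℝ}
    (hF : HasPowerGrowthDeriv F F' p K) {u v : E → ℝ} {x : E} (hu : DifferentiableAt ℝ u x)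
    (hv : DifferentiableAt ℝ v x) :
    DifferentiableAt ℝ (F ∘ u) x ∧ DifferentiableAt ℝ (F ∘ v) x ∧
      ‖gradient (F ∘ u) x - gradient (F ∘ v) x‖
        ≤ K * |u x| ^ (p - 1) * ‖gradient u x - gradient v x‖
          + K * ‖gradient v x‖ * (|u x| ^ (p - 2) + |v x| ^ (p - 2)) * |u x - v x| := by
  have hFu := (hF.hasDerivAt (u x)).comp_hasGradientAt hu.hasGradientAt
  have hFv := (hF.hasDerivAt (v x)).comp_hasGradientAt hv.hasGradientAt
  refine ⟨hFu.differentiableAt, hFv.differentiableAt, ?_⟩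
  rw [hFu.gradient, hFv.gradient]
  calc _ ≤ |F' (u x)| * ‖gradient u x - gradient v x‖
        + |F' (u x) - F' (v x)| * ‖gradient v x‖ := norm_smul_sub_smul_le _ _ _ _
    _ ≤ K * |u x| ^ (p - 1) * ‖gradient u x - gradient v x‖
        + K * (|u x| ^ (p - 2) + |v x| ^ (p - 2)) * |u x - v x| * ‖gradient v x‖ := by
        gcongr
        exacts [hF.abs_le _, hF.abs_sub_le _ _]
    _ = _ := by ring

end Gradient

theorem statement14 (p : ℝ) (hp : 2 ≤ p) (F : ℝ → ℝ)
    (hF : (∀ s : ℝ, F s = |s| ^ p) ∨ (∀ s : ℝ, F s = |s| ^ (p - 1) * s)) :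
    ∃ C : ℝ, 0 < C ∧
      ∀ (n : ℕ) (u v : EuclideanSpace ℝ (Fin n) → ℝ) (x : EuclideanSpace ℝ (Fin n)),
        DifferentiableAt ℝ u x → DifferentiableAt ℝ v x →
        DifferentiableAt ℝ (F ∘ u) x ∧ DifferentiableAt ℝ (F ∘ v) x ∧
        ‖gradient (F ∘ u) x - gradient (F ∘ v) x‖
          ≤ C * |u x| ^ (p - 1) * ‖gradient u x - gradient v x‖
            + C * ‖gradient v x‖ * (|u x| ^ (p - 2) + |v x| ^ (p - 2)) * |u x - v x| := by
  obtain ⟨F', hF'⟩ : ∃ F', HasPowerGrowthDeriv F F' p (p ^ 2) := by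
    rcases hF with hF | hF <;> obtain rfl : F = _ := funext hF
    exacts [⟨_, hasPowerGrowthDeriv_abs_rpow hp⟩,
      ⟨_, hasPowerGrowthDeriv_abs_rpow_sub_one_mul_self hp⟩]
  exact ⟨p ^ 2, by positivity, fun n u v x hu hv => hF'.norm_gradient_comp_sub_le hu hv⟩
end
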